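/- Let K be a field of characteristic different from 2 and from 3, and let u, v ∈ K with u² + u + 1 ≠ 0. Set w = −27u² − 27u − 7, t = 4w + 1, and y = 4(2v+1)(w−20)/3. Then y² = −(1−t)(27 − t/3) if and only if (u² + u + 1)(v² + v + 1) = 5/9. -/

import Mathlib

/-! With `p = u² + u + 1` one has `w - 20 = -27p`, so `y = -36(2v+1)p`, `1 - t = 108p - 80` and
`27 - t/3 = 36p`. Using `(2v+1)² = 4(v² + v + 1) - 3`, the difference of the two sides of the
curve equation factors as `576 p (9 p (v² + v + 1) - 5)`; since `576 = 2⁶3²` and `p` are units,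
it vanishes exactly when `p (v² + v + 1) = 5/9`. -/

theorem curve_equation_sub_eq_mul {K : Type*} [Field K] (h3 : (3 : K) ≠ 0) (u v : K) :
    (4 * (2 * v + 1) * ((-27 * u ^ 2 - 27 * u - 7) - 20) / 3) ^ 2 -
      -(1 - (4 * (-27 * u ^ 2 - 27 * u - 7) + 1)) *
        (27 - (4 * (-27 * u ^ 2 - 27 * u - 7) + 1) / 3) =
    576 * (u ^ 2 + u + 1) * (9 * ((u ^ 2 + u + 1) * (v ^ 2 + v + 1)) - 5) := by
  field_simp
  ring

theorem coordinate_change_defining_equation (K : Type*) [Field K]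
    (h2 : (2 : K) ≠ 0) (h3 : (3 : K) ≠ 0) (u v : K) (hu : u ^ 2 + u + 1 ≠ 0) :
    (4 * (2 * v + 1) * ((-27 * u ^ 2 - 27 * u - 7) - 20) / 3) ^ 2 =
      -(1 - (4 * (-27 * u ^ 2 - 27 * u - 7) + 1)) *
        (27 - (4 * (-27 * u ^ 2 - 27 * u - 7) + 1) / 3) ↔
    (u ^ 2 + u + 1) * (v ^ 2 + v + 1) = 5 / 9 := by
  have h9 : (9 : K) ≠ 0 := by simpa [show (9 : K) = 3 ^ 2 by norm_num] using h3
  have h576 : (576 : K) ≠ 0 := by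
    rw [show (576 : K) = 2 ^ 6 * 3 ^ 2 by norm_num]
    exact mul_ne_zero (pow_ne_zero _ h2) (pow_ne_zero _ h3)
  rw [← sub_eq_zero, curve_equation_sub_eq_mul h3, mul_eq_zero, or_iff_right (mul_ne_zero h576 hu),
    sub_eq_zero, eq_div_iff h9, mul_comm]
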